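/- Let (X,d) be a metric space and let ν be a Borel measure on X whose support is all of X and which is finite on bounded sets, satisfying the Bishop–Gromov inequality with parameters (K,N), where K ≤ 0 and 1 < N < ∞. Let ε > 0, let 𝒩 be a maximal ε-separated net in X, and let G(𝒩) be the associated discretization graph. Then every vertex p ∈ 𝒩 has degree ρ(p) ≤ (∫₀^{9ε/2} S_K^N(t) dt) / (∫₀^{ε/2} S_K^N(t) dt) − 1; in particular G(𝒩) has bounded geometry. -/

import Mathlib

open MeasureTheory Metric

/-- The model volume density `S_K^N` for `K ≤ 0`, `1 < N < ∞`. -/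
noncomputable def SKN (K N t : ℝ) : ℝ :=
  if K = 0 then t ^ (N - 1)
  else Real.sinh (Real.sqrt (|K| / (N - 1)) * t) ^ (N - 1)

/-- A Borel measure `ν` of full support satisfies the Bishop–Gromov inequality with
parameters `(K, N)` if for every `x` the function
`r ↦ ν(B(x,r)) / ∫₀^r S_K^N(t) dt` is nonincreasing on `(0, ∞)`. -/
def BishopGromov {X : Type*} [MetricSpace X] [MeasurableSpace X]
    (ν : Measure X) (K N : ℝ) : Prop :=
  ∀ x : X, AntitoneOn
    (fun r => (ν (ball x r)).toReal / ∫ t in (0:ℝ)..r, SKN K N t) (Set.Ioi 0)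

/-- A subset `𝒩` of a metric space is `ε`-separated if distinct points of `𝒩` are at
distance at least `ε`. -/
def IsSeparated {X : Type*} [MetricSpace X] (𝒩 : Set X) (ε : ℝ) : Prop :=
  ∀ p ∈ 𝒩, ∀ q ∈ 𝒩, p ≠ q → ε ≤ dist p q

/-- A maximal `ε`-separated net: an `ε`-separated set maximal with respect to inclusion. -/
def IsMaximalNet {X : Type*} [MetricSpace X] (𝒩 : Set X) (ε : ℝ) : Prop :=
  IsSeparated 𝒩 ε ∧ ∀ M : Set X, 𝒩 ⊆ M → IsSeparated M ε → M = 𝒩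

/-- The discretization graph `G(𝒩)`: vertices are points of `𝒩`, and distinct `p, q`
are adjacent iff `B(p,ε) ∩ B(q,ε) ≠ ∅`, equivalently `dist p q < 2ε`. -/
def netGraph {X : Type*} [MetricSpace X] (𝒩 : Set X) (ε : ℝ) : SimpleGraph 𝒩 where
  Adj p q := p ≠ q ∧ dist (p : X) (q : X) < 2 * ε
  symm := by
    constructor
    intro p q h
    exact ⟨h.1.symm, by rw [dist_comm]; exact h.2⟩
  loopless := by
    constructor
    intro p h
    exact h.1 rfl

/-!
Let `I(r) = ∫₀^r S_K^N`. The net points within `2ε` of `p` (including `p`) have pairwise disjoint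
`ε/2`-balls, all contained in `B(p, 5ε/2)`. Each such `q` satisfies `B(p, 5ε/2) ⊆ B(q, 9ε/2)`, so
Bishop–Gromov gives `ν(B(q, ε/2)) ≥ (I(ε/2) / I(9ε/2)) · ν(B(p, 5ε/2))`. Summing over the disjoint
balls bounds their number by `I(9ε/2) / I(ε/2)`; removing `p` itself bounds the degree.
-/

lemma SKN_pos (K : ℝ) {N : ℝ} (hN : 1 < N) {t : ℝ} (ht : 0 < t) : 0 < SKN K N t := by
  unfold SKN
  split_ifs with hK
  · exact Real.rpow_pos_of_pos ht _
  · refine Real.rpow_pos_of_pos (Real.sinh_pos_iff.mpr (mul_pos ?_ ht)) _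
    exact Real.sqrt_pos.mpr (div_pos (abs_pos.mpr hK) (by linarith))

lemma continuous_SKN (K : ℝ) {N : ℝ} (hN : 1 ≤ N) : Continuous (SKN K N) := by
  unfold SKN
  split_ifs
  · exact continuous_id.rpow_const fun _ => Or.inr (by linarith)
  · exact (Real.continuous_sinh.comp (continuous_const.mul continuous_id)).rpow_const
      fun _ => Or.inr (by linarith)

lemma integral_SKN_pos (K : ℝ) {N : ℝ} (hN : 1 < N) {r : ℝ} (hr : 0 < r) :
    0 < ∫ t in (0:ℝ)..r, SKN K N t :=
  intervalIntegral.intervalIntegral_pos_of_pos_on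
    ((continuous_SKN K hN.le).intervalIntegrable 0 r) (fun _ ht => SKN_pos K hN ht.1) hr

lemma IsSeparated.pairwise {X : Type*} [MetricSpace X] {𝒩 : Set X} {ε : ℝ}
    (h : IsSeparated 𝒩 ε) : 𝒩.Pairwise fun a b => ε ≤ dist a b :=
  h

lemma Set.finite_and_ncard_le_of_forall_finset_card_le {α : Type*} {s : Set α} {c : ℝ}
    (h : ∀ F : Finset α, ↑F ⊆ s → (F.card : ℝ) ≤ c) : s.Finite ∧ (s.ncard : ℝ) ≤ c := by
  have hfin : s.Finite := by
    by_contra hinf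
    obtain ⟨F, hFs, hcard⟩ := Set.Infinite.exists_subset_card_eq hinf (⌊c⌋₊ + 1)
    have hle := h F hFs
    rw [hcard, Nat.cast_add_one] at hle
    linarith [Nat.lt_floor_add_one c]
  exact ⟨hfin, Set.ncard_eq_toFinset_card s hfin ▸ h _ (by simp)⟩

section Packing

variable {X : Type*} [MetricSpace X] [MeasurableSpace X]

lemma sum_measure_ball_le_measure_ball [OpensMeasurableSpace X] (ν : Measure X) {F : Finset X}
    {p : X} {r R : ℝ} (hsep : (F : Set X).Pairwise fun a b => r ≤ dist a b)
    (hF : ∀ q ∈ F, dist q p ≤ R) :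
    ∑ q ∈ F, ν (ball q (r / 2)) ≤ ν (ball p (R + r / 2)) := by
  have hdisj : (F : Set X).PairwiseDisjoint fun q => ball q (r / 2) :=
    fun a ha b hb hab => ball_disjoint_ball (by linarith [hsep ha hb hab])
  rw [← measure_biUnion_finset hdisj fun q _ => measurableSet_ball]
  exact measure_mono <| Set.iUnion₂_subset fun q hq =>
    ball_subset_ball' (by linarith [hF q hq])

lemma BishopGromov.toReal_measure_ball_mul_integral_le {ν : Measure X} {K N : ℝ}
    (hBG : BishopGromov ν K N) (hN : 1 < N) (x : X) {r R : ℝ} (hr : 0 < r) (hrR : r ≤ R) :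
    (ν (ball x R)).toReal * ∫ t in (0:ℝ)..r, SKN K N t ≤
      (ν (ball x r)).toReal * ∫ t in (0:ℝ)..R, SKN K N t :=
  (div_le_div_iff₀ (integral_SKN_pos K hN (hr.trans_le hrR)) (integral_SKN_pos K hN hr)).mp
    (hBG x hr (hr.trans_le hrR) hrR)

theorem BishopGromov.card_le_of_pairwise_le_dist [OpensMeasurableSpace X] {ν : Measure X}
    {K N : ℝ} (hBG : BishopGromov ν K N) (hN : 1 < N) (hball : ∀ x r, ν (ball x r) ≠ ⊤)
    {p : X} {r R : ℝ} (hr : 0 < r) (hR : 0 ≤ R) (hpos : 0 < ν (ball p (R + r / 2)))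
    {F : Finset X} (hsep : (F : Set X).Pairwise fun a b => r ≤ dist a b)
    (hF : ∀ q ∈ F, dist q p ≤ R) :
    (F.card : ℝ) ≤
      (∫ t in (0:ℝ)..(2 * R + r / 2), SKN K N t) / ∫ t in (0:ℝ)..(r / 2), SKN K N t := by
  set I₁ := ∫ t in (0:ℝ)..(r / 2), SKN K N t
  set I₂ := ∫ t in (0:ℝ)..(2 * R + r / 2), SKN K N t
  set V := (ν (ball p (R + r / 2))).toReal
  have hV : 0 < V := ENNReal.toReal_pos hpos.ne' (hball _ _)
  have hlow : ∀ q ∈ F, V * I₁ ≤ (ν (ball q (r / 2))).toReal * I₂ := by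
    intro q hq
    have hsub : ball p (R + r / 2) ⊆ ball q (2 * R + r / 2) :=
      ball_subset_ball' (by linarith [hF q hq, dist_comm p q])
    calc V * I₁ ≤ (ν (ball q (2 * R + r / 2))).toReal * I₁ :=
          mul_le_mul_of_nonneg_right (ENNReal.toReal_mono (hball _ _) (measure_mono hsub))
            (integral_SKN_pos K hN (half_pos hr)).le
      _ ≤ (ν (ball q (r / 2))).toReal * I₂ :=
          hBG.toReal_measure_ball_mul_integral_le hN q (half_pos hr) (by linarith)
  have hsum : ∑ q ∈ F, (ν (ball q (r / 2))).toReal ≤ V := by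
    rw [← ENNReal.toReal_sum fun q _ => hball _ _]
    exact ENNReal.toReal_mono (hball _ _) (sum_measure_ball_le_measure_ball ν hsep hF)
  have hcount : (F.card : ℝ) * I₁ * V ≤ I₂ * V :=
    calc (F.card : ℝ) * I₁ * V = ∑ _q ∈ F, V * I₁ := by
          rw [Finset.sum_const, nsmul_eq_mul]; ring
      _ ≤ ∑ q ∈ F, (ν (ball q (r / 2))).toReal * I₂ := Finset.sum_le_sum hlow
      _ = (∑ q ∈ F, (ν (ball q (r / 2))).toReal) * I₂ := (Finset.sum_mul ..).symm
      _ ≤ V * I₂ := by gcongr; exact (integral_SKN_pos K hN (by linarith)).le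
      _ = I₂ * V := mul_comm _ _
  exact (le_div_iff₀ (integral_SKN_pos K hN (half_pos hr))).mpr (le_of_mul_le_mul_right hcount hV)

end Packing

theorem IsSeparated.neighborSet_finite_and_ncard_le {X : Type*} [MetricSpace X]
    [MeasurableSpace X] [OpensMeasurableSpace X] {ν : Measure X}
    (hfull : ∀ x : X, ∀ r > (0:ℝ), 0 < ν (ball x r)) (hball : ∀ x r, ν (ball x r) ≠ ⊤)
    {K N : ℝ} (hN : 1 < N) (hBG : BishopGromov ν K N) {ε : ℝ} (hε : 0 < ε) {𝒩 : Set X}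
    (hsep : IsSeparated 𝒩 ε) (p : 𝒩) :
    ((netGraph 𝒩 ε).neighborSet p).Finite ∧
      (((netGraph 𝒩 ε).neighborSet p).ncard : ℝ) ≤
        (∫ t in (0:ℝ)..(9 * ε / 2), SKN K N t) / (∫ t in (0:ℝ)..(ε / 2), SKN K N t) - 1 := by
  classical
  refine Set.finite_and_ncard_le_of_forall_finset_card_le fun F hF => ?_
  set G : Finset X := insert (p : X) (F.map (Function.Embedding.subtype _))
  have hp : (p : X) ∉ F.map (Function.Embedding.subtype _) := by
    simp only [Finset.mem_map, Function.Embedding.coe_subtype, not_exists, not_and]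
    exact fun q hq hqp => (hF hq).1 (Subtype.ext hqp).symm
  have hG𝒩 : (G : Set X) ⊆ 𝒩 := by simp [G, Set.insert_subset_iff]
  have hGdist : ∀ q ∈ G, dist q p ≤ 2 * ε := by
    simp only [G, Finset.mem_insert, Finset.mem_map, Function.Embedding.coe_subtype]
    rintro q (rfl | ⟨q, hq, rfl⟩)
    · simp only [dist_self]; positivity
    · rw [dist_comm]; exact (hF hq).2.le
  have hcard := hBG.card_le_of_pairwise_le_dist hN hball hε (by positivity)
    (hfull _ _ (by positivity)) (hsep.pairwise.mono hG𝒩) hGdist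
  rw [Finset.card_insert_of_notMem hp, Finset.card_map, Nat.cast_add_one,
    show 2 * (2 * ε) + ε / 2 = 9 * ε / 2 by ring] at hcard
  linarith

theorem stmt_7_general {X : Type*} [MetricSpace X] [MeasurableSpace X] [BorelSpace X]
    (ν : Measure X)
    (hfull : ∀ x : X, ∀ r > (0:ℝ), 0 < ν (ball x r))
    (hbdd : ∀ s : Set X, Bornology.IsBounded s → ν s < ⊤)
    (K N : ℝ) (hN : 1 < N)
    (hBG : BishopGromov ν K N)
    (ε : ℝ) (hε : 0 < ε) (𝒩 : Set X) (hnet : IsMaximalNet 𝒩 ε) :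
    (∀ p : 𝒩, ((netGraph 𝒩 ε).neighborSet p).Finite ∧
      (((netGraph 𝒩 ε).neighborSet p).ncard : ℝ) ≤
        (∫ t in (0:ℝ)..(9 * ε / 2), SKN K N t) /
          (∫ t in (0:ℝ)..(ε / 2), SKN K N t) - 1) ∧
    ∃ ρ₀ : ℕ, ∀ p : 𝒩, ((netGraph 𝒩 ε).neighborSet p).ncard ≤ ρ₀ := by
  have hdeg := hnet.1.neighborSet_finite_and_ncard_le hfull
    (fun _ _ => (hbdd _ isBounded_ball).ne) hN hBG hε
  exact ⟨hdeg, _, fun p => Nat.le_floor (hdeg p).2⟩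

theorem stmt_7 {X : Type*} [MetricSpace X] [MeasurableSpace X] [BorelSpace X]
    (ν : Measure X)
    (hfull : ∀ x : X, ∀ r > (0:ℝ), 0 < ν (ball x r))
    (hbdd : ∀ s : Set X, Bornology.IsBounded s → ν s < ⊤)
    (K N : ℝ) (hK : K ≤ 0) (hN : 1 < N)
    (hBG : BishopGromov ν K N)
    (ε : ℝ) (hε : 0 < ε) (𝒩 : Set X) (hnet : IsMaximalNet 𝒩 ε) :
    (∀ p : 𝒩, ((netGraph 𝒩 ε).neighborSet p).Finite ∧
      (((netGraph 𝒩 ε).neighborSet p).ncard : ℝ) ≤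
        (∫ t in (0:ℝ)..(9 * ε / 2), SKN K N t) /
          (∫ t in (0:ℝ)..(ε / 2), SKN K N t) - 1) ∧
    ∃ ρ₀ : ℕ, ∀ p : 𝒩, ((netGraph 𝒩 ε).neighborSet p).ncard ≤ ρ₀ :=
  stmt_7_general ν hfull hbdd K N hN hBG ε hε 𝒩 hnet
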